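/- Let q be a nonzero complex number. Then the quotient ring ℂ[x]/⟨x² − q⟩ is isomorphic, as a ℂ-algebra, to the quotient of the Laurent polynomial ring ℂ[z, z⁻¹] by the ideal generated by 1 − q·z⁻². -/

import Mathlib

/-!
If the constant term `p(0)` of `p ∈ R[x]` is a unit, so is the class of `x` modulo `p`, because
`x · (p − p(0))/x ≡ −p(0)`. Evaluation at it therefore extends from `R[x]` to `R[z, z⁻¹]`, giving
`R[x]/⟨p⟩ ≅ R[z, z⁻¹]/⟨p⟩`. For `p = x² − q` it remains to note that `1 − q z⁻² = z⁻² (z² − q)`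
generates the same ideal as `z² − q`.
-/

open Polynomial LaurentPolynomial

namespace Polynomial

variable {R : Type*} [CommRing R] {p : R[X]}

theorem isUnit_quotient_mk_X_of_isUnit_coeff_zero (hp : IsUnit (p.coeff 0)) :
    IsUnit (Ideal.Quotient.mk (Ideal.span {p}) X) := by
  have h : Ideal.Quotient.mk (Ideal.span {p}) X * Ideal.Quotient.mk _ p.divX =
      -Ideal.Quotient.mk _ (C (p.coeff 0)) := by
    rw [← map_mul, ← map_neg, Ideal.Quotient.eq, sub_neg_eq_add, X_mul_divX_add]
    exact Ideal.mem_span_singleton_self p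
  refine isUnit_of_mul_isUnit_left (y := Ideal.Quotient.mk _ p.divX) ?_
  rw [h]
  exact (hp.map ((Ideal.Quotient.mk (Ideal.span {p})).comp C)).neg

theorem eval₂_quotient_mk_X_self :
    p.eval₂ ((Ideal.Quotient.mk (Ideal.span {p})).comp C) (Ideal.Quotient.mk _ X) = 0 := by
  rw [← hom_eval₂, eval₂_C_X, Ideal.Quotient.eq_zero_iff_mem]
  exact Ideal.mem_span_singleton_self p

end Polynomial

namespace LaurentPolynomial

variable {R : Type*} [CommRing R]

theorem span_toLaurent_X_pow_sub_C (n : ℕ) (q : R) :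
    Ideal.span {toLaurent (X ^ n - Polynomial.C q)} = Ideal.span {1 - C q * T (-n)} := by
  have h : 1 - C q * T (-n) = T (-n) * toLaurent (X ^ n - Polynomial.C q) := by
    rw [map_sub, toLaurent_X_pow, toLaurent_C, mul_sub, ← T_add, neg_add_cancel, T_zero, mul_comm]
  rw [h, Ideal.span_singleton_mul_left_unit (isUnit_T _)]

variable {p : R[X]}

noncomputable def toLaurentQuotient (p : R[X]) :
    R[X] ⧸ Ideal.span {p} →ₐ[R] R[T;T⁻¹] ⧸ Ideal.span {toLaurent p} :=
  Ideal.quotientMapₐ _ toLaurentAlg <| (Ideal.span_singleton_le_iff_mem _).mpr <|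
    Ideal.mem_span_singleton_self _

theorem toLaurentQuotient_mk (f : R[X]) :
    toLaurentQuotient p (Ideal.Quotient.mk _ f) = Ideal.Quotient.mk _ (toLaurent f) :=
  rfl

noncomputable def ofLaurentQuotient (hp : IsUnit (p.coeff 0)) :
    R[T;T⁻¹] ⧸ Ideal.span {toLaurent p} →+* R[X] ⧸ Ideal.span {p} :=
  Ideal.Quotient.lift _
    (eval₂ ((Ideal.Quotient.mk _).comp Polynomial.C)
      (isUnit_quotient_mk_X_of_isUnit_coeff_zero hp).unit) <| by
    intro a ha
    obtain ⟨b, rfl⟩ := Ideal.mem_span_singleton'.mp ha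
    rw [map_mul, eval₂_toLaurent, IsUnit.unit_spec, eval₂_quotient_mk_X_self, mul_zero]

theorem ofLaurentQuotient_mk (hp : IsUnit (p.coeff 0)) (f : R[T;T⁻¹]) :
    ofLaurentQuotient hp (Ideal.Quotient.mk _ f) =
      eval₂ ((Ideal.Quotient.mk _).comp Polynomial.C)
        (isUnit_quotient_mk_X_of_isUnit_coeff_zero hp).unit f :=
  rfl

theorem ofLaurentQuotient_comp_toLaurentQuotient (hp : IsUnit (p.coeff 0)) :
    (ofLaurentQuotient hp).comp (toLaurentQuotient p).toRingHom = RingHom.id _ := by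
  refine Ideal.Quotient.ringHom_ext (Polynomial.ringHom_ext (fun _ => ?_) ?_) <;>
    simp [toLaurentQuotient_mk, ofLaurentQuotient_mk]

theorem toLaurentQuotient_comp_ofLaurentQuotient (hp : IsUnit (p.coeff 0)) :
    (toLaurentQuotient p).toRingHom.comp (ofLaurentQuotient hp) = RingHom.id _ := by
  refine Ideal.Quotient.ringHom_ext (IsLocalization.ringHom_ext (Submonoid.powers (X : R[X]))
    (Polynomial.ringHom_ext (fun _ => ?_) ?_)) <;>
    simp [toLaurentQuotient_mk, ofLaurentQuotient_mk, ← Ideal.Quotient.mk_algebraMap]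

noncomputable def quotientSpanEquivToLaurent (hp : IsUnit (p.coeff 0)) :
    (R[X] ⧸ Ideal.span {p}) ≃ₐ[R] R[T;T⁻¹] ⧸ Ideal.span {toLaurent p} :=
  AlgEquiv.ofRingEquiv (f := RingEquiv.ofRingHom (toLaurentQuotient p).toRingHom
    (ofLaurentQuotient hp) (toLaurentQuotient_comp_ofLaurentQuotient hp)
    (ofLaurentQuotient_comp_toLaurentQuotient hp)) (toLaurentQuotient p).commutes

end LaurentPolynomial

/-- mirror symmetry for ℙ¹: for any nonzero complex number `q`, the ring
`ℂ[x]/⟨x² − q⟩` (the quantum cohomology `QH*(ℙ¹, ℂ)` with quantum parameter `q`) is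
isomorphic as a ℂ-algebra to `ℂ[z, z⁻¹]/⟨1 − q·z⁻²⟩` (the Jacobian ring of the mirror
Landau–Ginzburg superpotential `W(z) = z + q/z`). -/
theorem quantum_cohomology_P1_iso_jacobian_ring (q : ℂ) (hq : q ≠ 0) :
    Nonempty
      ((ℂ[X] ⧸ Ideal.span {(X : ℂ[X]) ^ 2 - Polynomial.C q}) ≃ₐ[ℂ]
        (LaurentPolynomial ℂ ⧸
          Ideal.span {(1 : LaurentPolynomial ℂ) - LaurentPolynomial.C q * T (-2)})) := by
  have hp : IsUnit ((X ^ 2 - Polynomial.C q : ℂ[X]).coeff 0) := by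
    simpa using hq
  exact ⟨(quotientSpanEquivToLaurent hp).trans
    (Ideal.quotientEquivAlgOfEq ℂ (span_toLaurent_X_pow_sub_C 2 q))⟩
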